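/- If H : Q^op → Set preserves binary products (sends coproducts in Q to products in Set) and G : Q^op → Set is arbitrary, then the Day convolution internal hom (G ⊸_Day H)(C) = ∫_A Set(G A, H(C ⊗ A)) also preserves binary products, provided the tensor of Q distributes over binary coproducts. -/

import Mathlib

open CategoryTheory CategoryTheory.Limits MonoidalCategory Opposite

universe v u

variable {Q : Type u} [Category.{v} Q] [MonoidalCategory Q] [SymmetricCategory Q]
  [HasBinaryCoproducts Q]

/-- Restriction natural transformation `H((C₁+C₂) ⊗ -) ⟶ H(C ⊗ -)` induced by a map
`j : C ⟶ C'` (applied with the coproduct injections below). -/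
def restrictNat (H : Qᵒᵖ ⥤ Type v) {C C' : Q} (j : C ⟶ C') :
    (tensorLeft C').op ⋙ H ⟶ (tensorLeft C).op ⋙ H where
  app X := H.map ((j ▷ X.unop).op)
  naturality X Y f := by
    dsimp
    rw [← H.map_comp, ← H.map_comp, whisker_exchange]

/-! Since `⊗` is symmetric and distributes over `+`, `(C₁ + C₂) ⊗ D` is a coproduct of `C₁ ⊗ D`
and `C₂ ⊗ D`. Hence `H((C₁ + C₂) ⊗ -)` is, pointwise and therefore in the presheaf category, the
product of `H(C₁ ⊗ -)` and `H(C₂ ⊗ -)` along the restrictions, and `Nat(G, -)` preserves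
products. -/

section

universe w w₁ w₂

noncomputable def Types.isLimitBinaryFanMkOfBijective {X Y Z : Type w} (f : Z → X) (g : Z → Y)
    (h : Function.Bijective fun z => (f z, g z)) : IsLimit (BinaryFan.mk (↾f) (↾g)) :=
  let e := Equiv.ofBijective _ h
  (Types.binaryProductLimit X Y).ofIsoLimit <| BinaryFan.ext e.toIso.symm
    (by ext p; exact congrArg Prod.fst (e.apply_symm_apply p).symm)
    (by ext p; exact congrArg Prod.snd (e.apply_symm_apply p).symm)

lemma BinaryFan.IsLimit.bijective_comp_fst_snd {𝒞 : Type w₁} [Category.{w₂} 𝒞] {X Y W : 𝒞}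
    {s : BinaryFan X Y} (hs : IsLimit s) :
    Function.Bijective fun α : W ⟶ s.pt => (α ≫ s.fst, α ≫ s.snd) :=
  ⟨fun _ _ h => BinaryFan.IsLimit.hom_ext hs (congrArg Prod.fst h) (congrArg Prod.snd h),
    fun p => let l := BinaryFan.IsLimit.lift' hs p.1 p.2; ⟨l.1, Prod.ext l.2.1 l.2.2⟩⟩

noncomputable def isColimitBinaryCofanMkWhiskerRight {𝒞 : Type w₁} [Category.{w₂} 𝒞]
    [MonoidalCategory 𝒞] [BraidedCategory 𝒞] {X Y Z : 𝒞} (f : X ⟶ Z) (g : Y ⟶ Z) (D : 𝒞)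
    (h : IsColimit (BinaryCofan.mk (D ◁ f) (D ◁ g))) :
    IsColimit (BinaryCofan.mk (f ▷ D) (g ▷ D)) :=
  (BinaryCofan.isColimitCompRightIso _ (β_ D Y).inv
    (BinaryCofan.isColimitCompLeftIso _ (β_ D X).inv h)).ofIsoColimit
      (BinaryCofan.ext (β_ D Z)
        (show ((β_ D X).inv ≫ D ◁ f) ≫ (β_ D Z).hom = f ▷ D by simp)
        (show ((β_ D Y).inv ≫ D ◁ g) ≫ (β_ D Z).hom = g ▷ D by simp))

lemma bijective_map_inl_inr_of_isColimit {𝒞 : Type w₁} [Category.{w₂} 𝒞] (H : 𝒞ᵒᵖ ⥤ Type w)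
    {X Y Z : 𝒞} [HasBinaryCoproduct X Y]
    (hH : Function.Bijective fun x : H.obj (op (X ⨿ Y)) =>
      (H.map (coprod.inl : X ⟶ X ⨿ Y).op x, H.map (coprod.inr : Y ⟶ X ⨿ Y).op x))
    {f : X ⟶ Z} {g : Y ⟶ Z} (hc : IsColimit (BinaryCofan.mk f g)) :
    Function.Bijective fun x : H.obj (op Z) => (H.map f.op x, H.map g.op x) := by
  let i : Z ≅ X ⨿ Y := hc.coconePointUniqueUpToIso (colimit.isColimit (pair X Y))
  have hf : coprod.inl ≫ i.inv = f :=
    hc.comp_coconePointUniqueUpToIso_inv (colimit.isColimit (pair X Y)) ⟨.left⟩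
  have hg : coprod.inr ≫ i.inv = g :=
    hc.comp_coconePointUniqueUpToIso_inv (colimit.isColimit (pair X Y)) ⟨.right⟩
  convert hH.comp (H.mapIso i.symm.op).toEquiv.bijective using 1
  funext x
  simp [← Functor.map_comp_apply, ← op_comp, hf, hg]

end

/-- If `H : Qᵒᵖ → Set` preserves binary products (sends coproducts in `Q` to products in
`Set`) and `G : Qᵒᵖ → Set` is arbitrary, then the Day convolution internal hom
`(G ⊸_Day H)(C) = Nat(G, H(C ⊗ -))` also preserves binary products, provided the tensor
of `Q` distributes over binary coproducts: the canonical comparison map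
`(G ⊸ H)(C₁ + C₂) ⟶ (G ⊸ H)(C₁) × (G ⊸ H)(C₂)` is a bijection. -/
theorem day_hom_preserves_products (G H : Qᵒᵖ ⥤ Type v)
    -- `H` sends binary coproducts in `Q` to binary products in `Set`
    (hH : ∀ C₁ C₂ : Q, Function.Bijective
      (fun x : H.obj (op (C₁ ⨿ C₂)) =>
        (H.map ((coprod.inl : C₁ ⟶ C₁ ⨿ C₂)).op x,
         H.map ((coprod.inr : C₂ ⟶ C₁ ⨿ C₂)).op x)))
    -- the tensor distributes over binary coproducts
    (hdist : ∀ X C₁ C₂ : Q, Nonempty (IsColimit (BinaryCofan.mk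
      (X ◁ (coprod.inl : C₁ ⟶ C₁ ⨿ C₂)) (X ◁ (coprod.inr : C₂ ⟶ C₁ ⨿ C₂)))))
    (C₁ C₂ : Q) :
    Function.Bijective
      (fun α : G ⟶ (tensorLeft (C₁ ⨿ C₂)).op ⋙ H =>
        (α ≫ restrictNat H (coprod.inl : C₁ ⟶ C₁ ⨿ C₂),
         α ≫ restrictNat H (coprod.inr : C₂ ⟶ C₁ ⨿ C₂))) := by
  have hpointwise (D : Q) := bijective_map_inl_inr_of_isColimit H (hH (C₁ ⊗ D) (C₂ ⊗ D))
    (isColimitBinaryCofanMkWhiskerRight _ _ D (hdist D C₁ C₂).some)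
  have hlim : IsLimit (BinaryFan.mk (restrictNat H (coprod.inl : C₁ ⟶ C₁ ⨿ C₂))
      (restrictNat H (coprod.inr : C₂ ⟶ C₁ ⨿ C₂))) :=
    evaluationJointlyReflectsLimits _ fun D => (isLimitMapConeBinaryFanEquiv _ _ _).symm
      (Types.isLimitBinaryFanMkOfBijective _ _ (hpointwise D.unop))
  exact BinaryFan.IsLimit.bijective_comp_fst_snd hlim
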